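/- For x = (x¹,…,x⁸) ∈ ℝ⁸ let A(x) be the complex hermitian 3×3 matrix A(x) = [[x⁵ − √3·x⁴, √3·(x³ + i x⁸), √3·(x² + i x⁷)], [√3·(x³ − i x⁸), x⁵ + √3·x⁴, √3·(x¹ + i x⁶)], [√3·(x² − i x⁷), √3·(x¹ − i x⁶), −2x⁵]]. Then det A(x) is real for every x, and the totally symmetric tensor Υ_{IJK} (I,J,K = 1,…,8) defined by Υ_{IJK} x^I x^J x^K = (1/2)·det A(x) satisfies: (i) Υ_{IJK} = Υ_{(IJK)}; (ii) Σ_J Υ_{IJJ} = 0; (iii) Σ_I (Υ_{JKI}Υ_{LMI} + Υ_{LJI}Υ_{KMI} + Υ_{KLI}Υ_{JMI}) = δ_{JK}δ_{LM} + δ_{LJ}δ_{KM} + δ_{KL}δ_{JM}. -/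

import Mathlib

open Matrix

/-- The generic complex hermitian trace-free 3×3 matrix parametrized by `x ∈ ℝ⁸`
(indices: `x 0 = x¹, …, x 7 = x⁸`). -/
noncomputable def A8 (x : Fin 8 → ℝ) : Matrix (Fin 3) (Fin 3) ℂ :=
  !![(x 4 : ℂ) - Real.sqrt 3 * x 3,
     Real.sqrt 3 * ((x 2 : ℂ) + x 7 * Complex.I),
     Real.sqrt 3 * ((x 1 : ℂ) + x 6 * Complex.I);
     Real.sqrt 3 * ((x 2 : ℂ) - x 7 * Complex.I),
     (x 4 : ℂ) + Real.sqrt 3 * x 3,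
     Real.sqrt 3 * ((x 0 : ℂ) + x 5 * Complex.I);
     Real.sqrt 3 * ((x 1 : ℂ) - x 6 * Complex.I),
     Real.sqrt 3 * ((x 0 : ℂ) - x 5 * Complex.I),
     -2 * (x 4 : ℂ)]

/-!
A symmetric 3-tensor is recovered from its cubic form by polarization, so `Υ` is the tensor read
off from the monomials of `½ det A(x)`. Twice that tensor has entries in `ℤ[√3]`, where the
trace condition and the quadratic identity become finitely many exact identities, verified by
direct evaluation; the ring embedding `ℤ[√3] → ℝ` carries them over to `Υ`.
-/

section Polarization

variable {ι : Type*} [Fintype ι]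

def cubicForm (S : ι → ι → ι → ℝ) (x : ι → ℝ) : ℝ :=
  ∑ I, ∑ J, ∑ K, S I J K * x I * x J * x K

variable [DecidableEq ι]

theorem six_mul_eq_cubicForm_polarization (S : ι → ι → ι → ℝ)
    (h₁ : ∀ I J K, S I J K = S J I K) (h₂ : ∀ I J K, S I J K = S I K J) (a b c : ι) :
    6 * S a b c = cubicForm S (Pi.single a 1 + Pi.single b 1 + Pi.single c 1)
      - cubicForm S (Pi.single a 1 + Pi.single b 1) - cubicForm S (Pi.single a 1 + Pi.single c 1)
      - cubicForm S (Pi.single b 1 + Pi.single c 1) + cubicForm S (Pi.single a 1)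
      + cubicForm S (Pi.single b 1) + cubicForm S (Pi.single c 1) := by
  simp only [cubicForm, Pi.add_apply, mul_add, Finset.sum_add_distrib, Pi.single_apply,
    mul_ite, mul_one, mul_zero, Finset.sum_ite_eq', Finset.mem_univ, if_true]
  linarith [h₁ a b c, h₁ a c b, h₁ b a c, h₁ b c a, h₁ c a b, h₁ c b a,
    h₂ a b c, h₂ a c b, h₂ b a c, h₂ b c a, h₂ c a b, h₂ c b a,
    h₁ a a b, h₂ a a b, h₁ a a c, h₂ a a c, h₁ b b a, h₂ b b a,
    h₁ b b c, h₂ b b c, h₁ c c a, h₂ c c a, h₁ c c b, h₂ c c b]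

theorem eq_of_cubicForm_eq {S T : ι → ι → ι → ℝ}
    (hS₁ : ∀ I J K, S I J K = S J I K) (hS₂ : ∀ I J K, S I J K = S I K J)
    (hT₁ : ∀ I J K, T I J K = T J I K) (hT₂ : ∀ I J K, T I J K = T I K J)
    (h : ∀ x, cubicForm S x = cubicForm T x) : S = T := by
  funext a b c
  have hS := six_mul_eq_cubicForm_polarization S hS₁ hS₂ a b c
  have hT := six_mul_eq_cubicForm_polarization T hT₁ hT₂ a b c
  simp only [h] at hS
  linarith

end Polarization

section Pairing

variable {ι R : Type*} [CommRing R]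

def deltaPairing [DecidableEq ι] (J K L M : ι) : R :=
  (if J = K then 1 else 0) * (if L = M then 1 else 0)
    + (if L = J then 1 else 0) * (if K = M then 1 else 0)
    + (if K = L then 1 else 0) * (if J = M then 1 else 0)

theorem map_deltaPairing [DecidableEq ι] {S : Type*} [CommRing S] (f : R →+* S) (J K L M : ι) :
    f (deltaPairing J K L M) = deltaPairing J K L M := by
  simp only [deltaPairing, map_add, map_mul, apply_ite f, map_one, map_zero]

variable [Fintype ι]

def pairingSum (S : ι → ι → ι → R) (J K L M : ι) : R :=
  ∑ I, (S J K I * S L M I + S L J I * S K M I + S K L I * S J M I)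

theorem pairingSum_map_div {F : Type*} [Field F] (f : R →+* F) (c : F)
    (S : ι → ι → ι → R) (J K L M : ι) :
    pairingSum (fun I J K => f (S I J K) / c) J K L M = f (pairingSum S J K L M) / c ^ 2 := by
  simp only [pairingSum, map_sum, map_add, map_mul, Finset.sum_div]
  congr 1 with I
  ring

end Pairing

section SortArgs

variable {α β : Type*} [LinearOrder α]

/-- `max (min a b) (min (max a b) c)` is the median of `a, b, c`. -/
def sortArgs (f : α → α → α → β) (a b c : α) : β :=
  f (min a (min b c)) (max (min a b) (min (max a b) c)) (max a (max b c))

theorem sortArgs_swap₁₂ (f : α → α → α → β) (a b c : α) :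
    sortArgs f a b c = sortArgs f b a c := by
  simp only [sortArgs, min_left_comm a b c, max_left_comm a b c, min_comm a b, max_comm a b]

theorem sortArgs_swap₂₃ (f : α → α → α → β) (a b c : α) :
    sortArgs f a b c = sortArgs f a c b := by
  unfold sortArgs
  congr 1 <;> grind

end SortArgs

open Zsqrtd in
/-- For `I ≤ J ≤ K`, `m • twiceUpsilonSorted I J K` is the coefficient of `x^I x^J x^K` in
`det A(x)`, where `m` is the number of distinct orderings of `(I, J, K)`. -/
def twiceUpsilonSorted : Fin 8 → Fin 8 → Fin 8 → ℤ√3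
  | 0, 0, 3 => sqrtd
  | 0, 0, 4 => -1
  | 0, 1, 2 => sqrtd
  | 0, 6, 7 => sqrtd
  | 1, 1, 3 => -sqrtd
  | 1, 1, 4 => -1
  | 1, 5, 7 => -sqrtd
  | 2, 2, 4 => 2
  | 2, 5, 6 => sqrtd
  | 3, 3, 4 => 2
  | 3, 5, 5 => sqrtd
  | 3, 6, 6 => -sqrtd
  | 4, 4, 4 => -2
  | 4, 5, 5 => -1
  | 4, 6, 6 => -1
  | 4, 7, 7 => 2
  | _, _, _ => 0

def twiceUpsilon : Fin 8 → Fin 8 → Fin 8 → ℤ√3 := sortArgs twiceUpsilonSorted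

theorem sum_twiceUpsilon_diag : ∀ I, ∑ J, twiceUpsilon I J J = 0 := by
  decide +kernel

theorem pairingSum_twiceUpsilon :
    ∀ J K L M, pairingSum twiceUpsilon J K L M = 4 * deltaPairing J K L M := by
  decide +kernel

noncomputable def upsilon (I J K : Fin 8) : ℝ :=
  Zsqrtd.toReal (by norm_num : (0 : ℤ) ≤ 3) (twiceUpsilon I J K) / 2

theorem upsilon_swap₁₂ (I J K : Fin 8) : upsilon I J K = upsilon J I K := by
  rw [upsilon, upsilon, twiceUpsilon, sortArgs_swap₁₂]

theorem upsilon_swap₂₃ (I J K : Fin 8) : upsilon I J K = upsilon I K J := by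
  rw [upsilon, upsilon, twiceUpsilon, sortArgs_swap₂₃]

theorem sum_upsilon_diag (I : Fin 8) : ∑ J, upsilon I J J = 0 := by
  simp only [upsilon, ← Finset.sum_div, ← map_sum, sum_twiceUpsilon_diag, map_zero, zero_div]

theorem pairingSum_upsilon (J K L M : Fin 8) :
    pairingSum upsilon J K L M = deltaPairing J K L M := by
  unfold upsilon
  rw [pairingSum_map_div, pairingSum_twiceUpsilon, map_mul, map_deltaPairing]
  norm_num

theorem det_A8_eq_two_mul_cubicForm (x : Fin 8 → ℝ) :
    (A8 x).det = ((2 * cubicForm upsilon x : ℝ) : ℂ) := by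
  simp only [cubicForm, Fin.sum_univ_eight, upsilon, twiceUpsilon, sortArgs, min_def, max_def,
    Fin.reduceLE, ite_true, ite_false, Fin.isValue]
  simp only [twiceUpsilonSorted, map_neg, map_zero, map_one, map_ofNat, Zsqrtd.toReal_apply,
    Zsqrtd.re_sqrtd, Zsqrtd.im_sqrtd]
  simp only [A8, det_fin_three, of_apply, cons_val', cons_val_zero, cons_val_one, cons_val_two,
    empty_val', cons_val_fin_one, head_cons, tail_cons, head_fin_const]
  have h₂ : ((√3 : ℝ) : ℂ) ^ 2 = 3 := by norm_cast; simp
  have h₃ : ((√3 : ℝ) : ℂ) ^ 3 = 3 * √3 := by rw [pow_succ, h₂]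
  push_cast
  ring_nf
  simp only [Complex.I_sq, h₂, h₃]
  ring_nf

/-- `det A(x)` is real for every `x ∈ ℝ⁸`, and the totally symmetric tensor `Υ` on `ℝ⁸`
with `Υ_{IJK}x^Ix^Jx^K = ½ det A(x)` satisfies total symmetry (i), trace-freeness (ii),
and the quadratic identity (iii). -/
theorem statement3 (Υ : Fin 8 → Fin 8 → Fin 8 → ℝ)
    (hsym1 : ∀ I J K, Υ I J K = Υ J I K)
    (hsym2 : ∀ I J K, Υ I J K = Υ I K J)
    (hdef : ∀ x : Fin 8 → ℝ,
      ((∑ I, ∑ J, ∑ K, Υ I J K * x I * x J * x K : ℝ) : ℂ) = (1 / 2) * (A8 x).det) :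
    (∀ x : Fin 8 → ℝ, ∃ r : ℝ, (A8 x).det = (r : ℂ)) ∧
    ((∀ I J K, Υ I J K = Υ J I K) ∧ (∀ I J K, Υ I J K = Υ I K J)) ∧
    (∀ I, ∑ J, Υ I J J = 0) ∧
    (∀ J K L M, (∑ I, (Υ J K I * Υ L M I + Υ L J I * Υ K M I + Υ K L I * Υ J M I)) =
      (if J = K then (1 : ℝ) else 0) * (if L = M then (1 : ℝ) else 0)
      + (if L = J then (1 : ℝ) else 0) * (if K = M then (1 : ℝ) else 0)
      + (if K = L then (1 : ℝ) else 0) * (if J = M then (1 : ℝ) else 0)) := by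
  have hΥ : Υ = upsilon := by
    refine eq_of_cubicForm_eq hsym1 hsym2 upsilon_swap₁₂ upsilon_swap₂₃ fun x =>
      Complex.ofReal_injective ?_
    calc ((cubicForm Υ x : ℝ) : ℂ) = 1 / 2 * (A8 x).det := hdef x
      _ = cubicForm upsilon x := by rw [det_A8_eq_two_mul_cubicForm]; push_cast; ring
  subst hΥ
  exact ⟨fun x => ⟨_, det_A8_eq_two_mul_cubicForm x⟩, ⟨hsym1, hsym2⟩, sum_upsilon_diag,
    pairingSum_upsilon⟩
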